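/- For any finite digraph D = (V, A) and any nonempty subset S ⊆ V, cn(D) ≥ max(δ⁺(D[S]), δ⁻(D[S])), where D[S] is the subdigraph of D induced by S and δ⁺ (respectively δ⁻) denotes the minimum out-degree (respectively minimum in-degree). Consequently cn(D) ≥ max over nonempty S ⊆ V of max(δ⁺(D[S]), δ⁻(D[S])). -/

import Mathlib

open scoped Classical

/-- The out-neighborhood of a set `S` in the digraph with arc relation `A`. -/
noncomputable def Nplus {V : Type} [Fintype V] (A : V → V → Prop) (S : Finset V) : Finset V :=
  Finset.univ.filter (fun y => ∃ x ∈ S, A x y)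

/-- The robber territories associated with a cop strategy `W` (0-indexed:
`terr A W i` is the paper's `R_{i+1}`). -/
noncomputable def terr {V : Type} [Fintype V] [DecidableEq V]
    (A : V → V → Prop) (W : ℕ → Finset V) : ℕ → Finset V
  | 0 => Finset.univ \ W 0
  | i + 1 => Nplus A (terr A W i) \ W (i + 1)

/-- A cop strategy uses at most `k` cops. -/
def UsesAtMost {V : Type} (W : ℕ → Finset V) (k : ℕ) : Prop :=
  ∀ i, (W i).card ≤ k

/-- The cop number: the least `k` admitting a winning strategy using `k` cops. -/
noncomputable def copNumber {V : Type} [Fintype V] [DecidableEq V] (A : V → V → Prop) : ℕ :=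
  sInf {k | ∃ W : ℕ → Finset V, UsesAtMost W k ∧ ∃ t, terr A W t = ∅}

/-!
Let `k` cops play against the set `S`. If `k < δ⁺(D[S])` and the robber territory contains a vertex
of `S`, the cops cannot occupy all of its more than `k` out-neighbours in `S`, so the next territory
again meets `S`. If `k < δ⁻(D[S])`, then in every round the cops occupy all of `S` outside the
territory: a vertex of `S` that is neither in the territory nor occupied has no in-neighbour in the
previous territory, so by induction its more than `k` in-neighbours in `S` were all occupied in the
previous round, which is impossible. As `k < |S|`, the territory again meets `S`. Either way it is
never empty.
-/

open Finset

@[simp]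
lemma mem_Nplus {V : Type} [Fintype V] {A : V → V → Prop} {S : Finset V} {y : V} :
    y ∈ Nplus A S ↔ ∃ x ∈ S, A x y := by
  simp [Nplus]

section

variable {V : Type} [Fintype V] [DecidableEq V] (A : V → V → Prop)

lemma mem_terr_zero {W : ℕ → Finset V} {y : V} : y ∈ terr A W 0 ↔ y ∉ W 0 := by
  simp [terr]

lemma mem_terr_succ {W : ℕ → Finset V} {i : ℕ} {y : V} :
    y ∈ terr A W (i + 1) ↔ (∃ x ∈ terr A W i, A x y) ∧ y ∉ W (i + 1) := by
  simp [terr]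

lemma le_copNumber {d : ℕ}
    (h : ∀ k W, UsesAtMost W k → k < d → ∀ t, (terr A W t).Nonempty) : d ≤ copNumber A := by
  have hwin : {k | ∃ W : ℕ → Finset V, UsesAtMost W k ∧ ∃ t, terr A W t = ∅}.Nonempty :=
    ⟨Fintype.card V, fun _ => univ, fun _ => card_le_univ _, 0, by simp [terr]⟩
  refine le_csInf hwin ?_
  rintro k ⟨W, hW, t, ht⟩
  by_contra! hk
  simpa [ht] using h k W hW hk t

variable {A} {S : Finset V} {W : ℕ → Finset V} {k : ℕ}

lemma terr_inter_nonempty_of_lt_outDegree (hW : UsesAtMost W k) (hS : S.Nonempty)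
    (hdeg : ∀ x ∈ S, k < #(S.filter (fun y => A x y))) (i : ℕ) : (terr A W i ∩ S).Nonempty := by
  induction i with
  | zero =>
    obtain ⟨x, hx⟩ := hS
    obtain ⟨y, hyS, hyW⟩ := exists_mem_notMem_of_card_lt_card
      ((hW 0).trans_lt ((hdeg x hx).trans_le (card_filter_le _ _)))
    exact ⟨y, mem_inter.2 ⟨(mem_terr_zero A).2 hyW, hyS⟩⟩
  | succ i ih =>
    obtain ⟨x, hx⟩ := ih
    rw [mem_inter] at hx
    obtain ⟨y, hy, hyW⟩ := exists_mem_notMem_of_card_lt_card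
      ((hW (i + 1)).trans_lt (hdeg x hx.2))
    rw [mem_filter] at hy
    exact ⟨y, mem_inter.2 ⟨(mem_terr_succ A).2 ⟨⟨x, hx.1, hy.2⟩, hyW⟩, hy.1⟩⟩

lemma sdiff_terr_subset_of_lt_inDegree (hW : UsesAtMost W k)
    (hdeg : ∀ x ∈ S, k < #(S.filter (fun y => A y x))) (i : ℕ) : S \ terr A W i ⊆ W i := by
  induction i with
  | zero =>
    intro y hy
    rw [mem_sdiff, mem_terr_zero, not_not] at hy
    exact hy.2
  | succ i ih =>
    intro y hy
    rw [mem_sdiff, mem_terr_succ, not_and_or, not_not] at hy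
    refine hy.2.resolve_left fun hreach => ?_
    have hguarded : S.filter (fun x => A x y) ⊆ W i := fun x hx => by
      rw [mem_filter] at hx
      exact ih (mem_sdiff.2 ⟨hx.1, fun hxt => hreach ⟨x, hxt, hx.2⟩⟩)
    exact absurd ((card_le_card hguarded).trans (hW i)) (hdeg y hy.1).not_ge

lemma terr_inter_nonempty_of_lt_inDegree (hW : UsesAtMost W k) (hS : S.Nonempty)
    (hdeg : ∀ x ∈ S, k < #(S.filter (fun y => A y x))) (i : ℕ) : (terr A W i ∩ S).Nonempty := by
  obtain ⟨x, hx⟩ := hS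
  obtain ⟨y, hyS, hyW⟩ := exists_mem_notMem_of_card_lt_card
    ((hW i).trans_lt ((hdeg x hx).trans_le (card_filter_le _ _)))
  by_contra hempty
  exact hyW (sdiff_terr_subset_of_lt_inDegree hW hdeg i
    (mem_sdiff.2 ⟨hyS, fun hyt => hempty ⟨y, mem_inter.2 ⟨hyt, hyS⟩⟩⟩))

end

/-- For every nonempty `S ⊆ V`, `cn(D) ≥ max(δ⁺(D[S]), δ⁻(D[S]))`, where `D[S]` is
the induced subdigraph on `S` (here `δ⁺(D[S])` and `δ⁻(D[S])` are the minimum out-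
and in-degree inside `S`). -/
theorem copNumber_ge_max_min_degrees {V : Type} [Fintype V] [DecidableEq V]
    (A : V → V → Prop) (S : Finset V) (hS : S.Nonempty) :
    max (S.inf' hS (fun x => (S.filter (fun y => A x y)).card))
        (S.inf' hS (fun x => (S.filter (fun y => A y x)).card)) ≤ copNumber A := by
  refine max_le (le_copNumber A fun k W hW hk t => ?_) (le_copNumber A fun k W hW hk t => ?_)
  · exact (terr_inter_nonempty_of_lt_outDegree hW hS
      (fun x hx => hk.trans_le (inf'_le _ hx)) t).mono inter_subset_left
  · exact (terr_inter_nonempty_of_lt_inDegree hW hS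
      (fun x hx => hk.trans_le (inf'_le _ hx)) t).mono inter_subset_left
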